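/- arXiv:1804.06825 — 3 statements merged into one kernel-verified Lean document; each statement's English description precedes it below -/
import Mathlib

section
/- For every integer D ≥ 38 there exists a family of Kasner exponents q : Fin D → ℝ, i.e. real numbers q_1, …, q_D satisfying the Kasner constraints ∑_{i=1}^D q_i = 1 and ∑_{i=1}^D q_i^2 = 1, that in addition satisfies the moderate-anisotropy condition max_{i=1,…,D} |q_i| < 1/6. -/
/-- For every integer `D ≥ 38` there exists a family of Kasner exponents
`q : Fin D → ℝ` satisfying the Kasner constraints `∑ qᵢ = 1`, `∑ qᵢ² = 1`
and the moderate-anisotropy condition `maxᵢ |qᵢ| < 1/6`. -/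
theorem kasner_exponents_exist_of_dim_ge_38 (D : ℕ) (hD : 38 ≤ D) :
    ∃ q : Fin D → ℝ,
      (∑ i, q i = 1) ∧ (∑ i, q i ^ 2 = 1) ∧ ∀ i, |q i| < 1 / 6 := by
  set u : ℝ := Real.sqrt (37 / 352) / 38 with hu
  have hu0 : 0 ≤ u := by positivity
  have hu2 : u ^ 2 = 37 / 352 / 38 ^ 2 := by
    rw [hu, div_pow, Real.sq_sqrt (by norm_num : (37:ℝ)/352 ≥ 0)]
  have hult : u < 1 / 114 := by
    rw [hu, div_lt_iff₀ (by norm_num : (0:ℝ) < 38)]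
    have : Real.sqrt (37/352) < 1/3 := by
      rw [show (1:ℝ)/3 = Real.sqrt (1/9) by
        rw [show (1:ℝ)/9 = (1/3)^2 by norm_num, Real.sqrt_sq (by norm_num)]]
      exact Real.sqrt_lt_sqrt (by norm_num) (by norm_num)
    linarith
  set a : ℝ := 1/38 + 16 * u with ha
  set b : ℝ := 1/38 - 22 * u with hb
  refine ⟨fun i => if (i : ℕ) < 22 then a else if (i : ℕ) < 38 then b else 0, ?_, ?_, ?_⟩
  · show ∑ i : Fin D, (if (i : ℕ) < 22 then a else if (i : ℕ) < 38 then b else 0) = 1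
    rw [Fin.sum_univ_eq_sum_range (fun n => if n < 22 then a else if n < 38 then b else 0)]
    rw [Finset.range_eq_Ico, ← Finset.sum_Ico_consecutive _ (Nat.zero_le 38) hD]
    have h2 : ∑ n ∈ Finset.Ico 38 D,
        (if n < 22 then a else if n < 38 then b else 0) = 0 := by
      apply Finset.sum_eq_zero
      intro n hn
      have := (Finset.mem_Ico.mp hn).1
      rw [if_neg (by omega), if_neg (by omega)]
    rw [h2, add_zero, ← Finset.range_eq_Ico]
    simp [Finset.sum_range_succ]
    ring
  · show ∑ i : Fin D, (if (i : ℕ) < 22 then a else if (i : ℕ) < 38 then b else 0) ^ 2 = 1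
    rw [Fin.sum_univ_eq_sum_range (fun n => (if n < 22 then a else if n < 38 then b else 0) ^ 2)]
    rw [Finset.range_eq_Ico, ← Finset.sum_Ico_consecutive _ (Nat.zero_le 38) hD]
    have h2 : ∑ n ∈ Finset.Ico 38 D,
        (if n < 22 then a else if n < 38 then b else 0) ^ 2 = 0 := by
      apply Finset.sum_eq_zero
      intro n hn
      have := (Finset.mem_Ico.mp hn).1
      rw [if_neg (by omega), if_neg (by omega)]
      norm_num
    rw [h2, add_zero, ← Finset.range_eq_Ico]
    simp only [Finset.sum_range_succ, Finset.sum_range_zero]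
    norm_num
    have : 22 * a ^ 2 + 16 * b ^ 2 = 1 := by
      rw [ha, hb]
      ring_nf
      nlinarith [hu2]
    nlinarith [this]
  · intro i
    have hab : ∀ x : ℝ, x = a ∨ x = b ∨ x = 0 → |x| < 1/6 := by
      rintro x (rfl | rfl | rfl)
      · rw [abs_of_pos (by rw [ha]; nlinarith)]
        rw [ha]; nlinarith
      · rw [abs_lt]; constructor <;> [skip; skip] <;> rw [hb] <;> nlinarith
      · rw [abs_zero]; norm_num
    apply hab
    by_cases h1 : (i : ℕ) < 22
    · left; simp [h1]
    · by_cases h2 : (i : ℕ) < 38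
      · right; left; simp [h1, h2]
      · right; right; simp [h1, h2]
end

section
/- For every real ε with 0 < ε < 1/1296, the vector q : Fin 38 → ℝ defined by q_i = −1/6 + ε for 1 ≤ i ≤ 15, q_i = 1/6 − ε for 16 ≤ i ≤ 36, q₃₇ = 3ε + √(6ε − 27ε²), and q₃₈ = 3ε − √(6ε − 27ε²) satisfies ∑_{i=1}^{38} q_i = 1, ∑_{i=1}^{38} q_i² = 1, and |q_i| < 1/6 for every i; that is, it is a family of Kasner exponents in 38 spatial dimensions satisfying the moderate-anisotropy condition. -/
/-- For `0 < ε < 1/1296`, the explicit vector `q : Fin 38 → ℝ` with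
`qᵢ = -1/6 + ε` for the first 15 indices, `qᵢ = 1/6 - ε` for the next 21,
`q₃₇ = 3ε + √(6ε - 27ε²)` and `q₃₈ = 3ε - √(6ε - 27ε²)` is a family of Kasner
exponents in 38 spatial dimensions satisfying the moderate-anisotropy
condition `|qᵢ| < 1/6` for every `i`. -/
theorem kasner_dim38_construction (ε : ℝ) (h0 : 0 < ε) (h1 : ε < 1 / 1296) :
    let q : Fin 38 → ℝ := fun i =>
      if (i : ℕ) < 15 then -(1 / 6) + ε
      else if (i : ℕ) < 36 then 1 / 6 - ε
      else if (i : ℕ) = 36 then 3 * ε + Real.sqrt (6 * ε - 27 * ε ^ 2)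
      else 3 * ε - Real.sqrt (6 * ε - 27 * ε ^ 2)
    (∑ i, q i = 1) ∧ (∑ i, q i ^ 2 = 1) ∧ ∀ i, |q i| < 1 / 6 := by
  intro q
  set s : ℝ := Real.sqrt (6 * ε - 27 * ε ^ 2) with hs
  have harg : (0:ℝ) ≤ 6 * ε - 27 * ε ^ 2 := by nlinarith
  have hs2 : s ^ 2 = 6 * ε - 27 * ε ^ 2 := Real.sq_sqrt harg
  have hsnn : 0 ≤ s := Real.sqrt_nonneg _
  have hslt : s < 1 / 6 - 3 * ε := by nlinarith [hs2, hsnn]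
  refine ⟨?_, ?_, ?_⟩
  · show (∑ i : Fin 38, q i) = 1
    simp only [q, Fin.sum_univ_succ, Fin.sum_univ_zero]
    norm_num
    linarith
  · show (∑ i : Fin 38, q i ^ 2) = 1
    simp only [q, Fin.sum_univ_succ, Fin.sum_univ_zero]
    norm_num
    nlinarith [hs2]
  · intro i
    show |q i| < 1 / 6
    simp only [q]
    split_ifs <;> rw [abs_lt] <;> constructor <;> linarith
end

section
/- Let D be a positive integer, q : Fin D → ℝ, and let H, K : ℝ → Matrix (Fin D) (Fin D) ℝ and n : ℝ → ℝ. For t > 0 set H̃(t) := Matrix.diagonal (fun i => t^{−2 q_i}) and K̃(t) := −t^{−1}·Matrix.diagonal q. Suppose that at some t₀ > 0 the map H is differentiable with (H'(t₀))_{ij} = 2 n(t₀) ∑_a (H(t₀))_{ia} (K(t₀))_{ja} for all i, j. Then for all indices i, j, the function t ↦ t^{2 q_j}·((H(t))_{ij} − (H̃(t))_{ij}) is differentiable at t₀ with derivative equal to 2 t₀^{2 q_j} ∑_a ((H(t₀))_{ia} − (H̃(t₀))_{ia})·((K(t₀))_{ja} − (K̃(t₀))_{ja}) + 2 t₀^{−2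 q_i + 2 q_j}·((K(t₀))_{ji} − (K̃(t₀))_{ji}) + 2 t₀^{2 q_j} (n(t₀) − 1) ∑_a (H(t₀))_{ia}(K(t₀))_{ja}. -/
/-!
For `t > 0` the Kasner part of the rescaled quantity is constant:
`t^(2qⱼ) (H - H̃)ᵢⱼ = t^(2qⱼ) Hᵢⱼ - δᵢⱼ`, so its derivative comes from the product rule and the
evolution equation alone. The stated right-hand side agrees with it because
`∑ₐ (H - H̃)ᵢₐ (K - K̃)ⱼₐ + t^(-2qᵢ) (K - K̃)ⱼᵢ = ∑ₐ Hᵢₐ (K - K̃)ⱼₐ = ∑ₐ Hᵢₐ Kⱼₐ + t⁻¹ qⱼ Hᵢⱼ`.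
-/

open Matrix

section DiagonalSums

variable {ι : Type*} [Fintype ι] [DecidableEq ι]

lemma sum_sub_diagonal_apply_mul (x y d : ι → ℝ) (i : ι) :
    ∑ a, (x a - diagonal d i a) * y a = ∑ a, x a * y a - d i * y i := by
  simp [sub_mul, Finset.sum_sub_distrib, diagonal_apply]

lemma sum_mul_sub_diagonal_apply (x y e : ι → ℝ) (j : ι) :
    ∑ a, x a * (y a - diagonal e j a) = ∑ a, x a * y a - x j * e j := by
  simp_rw [mul_comm (x _), sum_sub_diagonal_apply_mul]

end DiagonalSums

lemma rpow_mul_diagonal_rpow_neg {ι : Type*} [DecidableEq ι] {t : ℝ} (ht : 0 < t) (c : ι → ℝ)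
    (i j : ι) :
    t ^ c j * diagonal (fun k => t ^ (-c k)) i j = (1 : Matrix ι ι ℝ) i j := by
  rcases eq_or_ne i j with rfl | hij
  · simp [← Real.rpow_add ht]
  · simp [hij]

theorem inverse_metric_difference_evolution_general (D : ℕ)
    (q : Fin D → ℝ)
    (H K : ℝ → Matrix (Fin D) (Fin D) ℝ) (n : ℝ → ℝ) (t₀ : ℝ) (ht₀ : 0 < t₀)
    (hH : ∀ i j, HasDerivAt (fun t => H t i j)
      (2 * n t₀ * ∑ a, H t₀ i a * K t₀ j a) t₀) :
    ∀ i j, HasDerivAt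
      (fun t => t ^ (2 * q j) *
        (H t i j - Matrix.diagonal (fun k => t ^ (-(2 * q k))) i j))
      (2 * t₀ ^ (2 * q j) *
          (∑ a, (H t₀ i a - Matrix.diagonal (fun k => t₀ ^ (-(2 * q k))) i a) *
            (K t₀ j a -
              (-(t₀⁻¹) • Matrix.diagonal q : Matrix (Fin D) (Fin D) ℝ) j a)) +
        2 * t₀ ^ (-(2 * q i) + 2 * q j) *
          (K t₀ j i -
            (-(t₀⁻¹) • Matrix.diagonal q : Matrix (Fin D) (Fin D) ℝ) j i) +
        2 * t₀ ^ (2 * q j) * (n t₀ - 1) * ∑ a, H t₀ i a * K t₀ j a) t₀ := by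
  intro i j
  have hkasner : (fun t => t ^ (2 * q j) * H t i j - (1 : Matrix (Fin D) (Fin D) ℝ) i j)
      =ᶠ[nhds t₀] fun t => t ^ (2 * q j) *
        (H t i j - diagonal (fun k => t ^ (-(2 * q k))) i j) := by
    filter_upwards [Ioi_mem_nhds ht₀] with t ht
    rw [mul_sub, rpow_mul_diagonal_rpow_neg ht (fun k => 2 * q k)]
  have hderiv := ((Real.hasDerivAt_rpow_const (p := 2 * q j) (Or.inl ht₀.ne')).mul
    (hH i j)).sub_const ((1 : Matrix (Fin D) (Fin D) ℝ) i j)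
  refine (hderiv.congr_of_eventuallyEq hkasner.symm).congr_deriv ?_
  rw [← diagonal_smul, sum_sub_diagonal_apply_mul, sum_mul_sub_diagonal_apply,
    Real.rpow_add ht₀, Real.rpow_sub ht₀, Real.rpow_one]
  simp only [Pi.smul_apply, smul_eq_mul]
  field_simp
  ring

/-- Equation (6.2b) of the paper: if at `t₀ > 0` the inverse-metric components
satisfy the CMC evolution equation `(∂_t g⁻¹)^{ij} = 2 n g^{ia} K^j_a`, then
the rescaled difference `t^(2qⱼ)(g^{ij} - g̃^{ij})` from the inverse Kasner
metric `g̃⁻¹(t) = diag(t^(-2qᵢ))` is differentiable at `t₀` with derivative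
`2 t₀^(2qⱼ) ∑_a (g⁻¹-g̃⁻¹)^{ia}(K-K̃)^j_a + 2 t₀^(-2qᵢ+2qⱼ)(K-K̃)^j_i
  + 2 t₀^(2qⱼ)(n-1) g^{ia}K^j_a`, where `K̃(t) = -t⁻¹ • diag q`. -/
theorem inverse_metric_difference_evolution (D : ℕ) (hD : 0 < D)
    (q : Fin D → ℝ)
    (H K : ℝ → Matrix (Fin D) (Fin D) ℝ) (n : ℝ → ℝ) (t₀ : ℝ) (ht₀ : 0 < t₀)
    (hH : ∀ i j, HasDerivAt (fun t => H t i j)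
      (2 * n t₀ * ∑ a, H t₀ i a * K t₀ j a) t₀) :
    ∀ i j, HasDerivAt
      (fun t => t ^ (2 * q j) *
        (H t i j - Matrix.diagonal (fun k => t ^ (-(2 * q k))) i j))
      (2 * t₀ ^ (2 * q j) *
          (∑ a, (H t₀ i a - Matrix.diagonal (fun k => t₀ ^ (-(2 * q k))) i a) *
            (K t₀ j a -
              (-(t₀⁻¹) • Matrix.diagonal q : Matrix (Fin D) (Fin D) ℝ) j a)) +
        2 * t₀ ^ (-(2 * q i) + 2 * q j) *
          (K t₀ j i -
            (-(t₀⁻¹) • Matrix.diagonal q : Matrix (Fin D) (Fin D) ℝ) j i) +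
        2 * t₀ ^ (2 * q j) * (n t₀ - 1) * ∑ a, H t₀ i a * K t₀ j a) t₀ :=
  inverse_metric_difference_evolution_general D q H K n t₀ ht₀ hH
end
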